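/- For all natural numbers k, K with k ≤ K, the k-th derivative of the function x ↦ tanh(x)^K at x = 0 equals 0 if k < K and equals K! if k = K. -/

import Mathlib

/-! Since `tanh' = 1 - tanh ^ 2`, the `(k + 1)`-st derivative of `tanh ^ n` is
`n` times the difference of the `k`-th derivatives of `tanh ^ (n - 1)` and `tanh ^ (n + 1)`.
Induction on `k`, starting from `tanh 0 = 0`, shows that the derivatives of order `k < n`
vanish at `0`, while the one of order `n` collects exactly the factors `n, n - 1, …, 1`. -/

open Nat

namespace Real

theorem hasDerivAt_tanh (x : ℝ) : HasDerivAt tanh (1 - tanh x ^ 2) x := by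
  have hcosh := (cosh_pos x).ne'
  rw [show tanh = fun x => sinh x / cosh x from funext tanh_eq_sinh_div_cosh]
  refine ((hasDerivAt_sinh x).div (hasDerivAt_cosh x) hcosh).congr_deriv ?_
  field_simp

@[fun_prop]
theorem contDiff_tanh {n : WithTop ℕ∞} : ContDiff ℝ n tanh := by
  rw [show tanh = fun x => sinh x / cosh x from funext tanh_eq_sinh_div_cosh]
  exact contDiff_sinh.div contDiff_cosh fun x => (cosh_pos x).ne'

theorem deriv_tanh_pow (n : ℕ) :
    deriv (fun x => tanh x ^ n) = fun x => n * tanh x ^ (n - 1) - n * tanh x ^ (n + 1) := by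
  funext x
  rw [((hasDerivAt_tanh x).fun_pow n).deriv]
  rcases n with _ | n
  · simp
  · simp only [Nat.add_sub_cancel]
    ring

theorem iteratedDeriv_succ_tanh_pow (k n : ℕ) (x : ℝ) :
    iteratedDeriv (k + 1) (fun x => tanh x ^ n) x =
      n * iteratedDeriv k (fun x => tanh x ^ (n - 1)) x -
        n * iteratedDeriv k (fun x => tanh x ^ (n + 1)) x := by
  rw [iteratedDeriv_succ', deriv_tanh_pow, iteratedDeriv_fun_sub (by fun_prop) (by fun_prop),
    iteratedDeriv_const_mul_field, iteratedDeriv_const_mul_field]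

theorem iteratedDeriv_tanh_pow_zero_of_lt {k n : ℕ} (h : k < n) :
    iteratedDeriv k (fun x => tanh x ^ n) 0 = 0 := by
  induction k generalizing n with
  | zero => simp [tanh_zero, zero_pow (by omega : n ≠ 0)]
  | succ k ih =>
    rw [iteratedDeriv_succ_tanh_pow, ih (by omega), ih (by omega)]
    ring

theorem iteratedDeriv_tanh_pow_self_zero (n : ℕ) :
    iteratedDeriv n (fun x => tanh x ^ n) 0 = n ! := by
  induction n with
  | zero => simp
  | succ n ih =>
    rw [iteratedDeriv_succ_tanh_pow, Nat.add_sub_cancel, ih,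
      iteratedDeriv_tanh_pow_zero_of_lt (by omega), factorial_succ]
    push_cast
    ring

end Real

theorem iteratedDeriv_tanh_pow_at_zero_general (k K : ℕ) :
    (k < K → iteratedDeriv k (fun x : ℝ => Real.tanh x ^ K) 0 = 0) ∧
      (k = K → iteratedDeriv k (fun x : ℝ => Real.tanh x ^ K) 0 = K.factorial) := by
  refine ⟨Real.iteratedDeriv_tanh_pow_zero_of_lt, ?_⟩
  rintro rfl
  exact Real.iteratedDeriv_tanh_pow_self_zero k

/-- For `k ≤ K`, the `k`-th derivative of `x ↦ tanh(x)^K` at `x = 0` is `0` if `k < K`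
and `K!` if `k = K`. -/
theorem iteratedDeriv_tanh_pow_at_zero (k K : ℕ) (hK : 1 ≤ K) (hkK : k ≤ K) :
    (k < K → iteratedDeriv k (fun x : ℝ => Real.tanh x ^ K) 0 = 0) ∧
      (k = K → iteratedDeriv k (fun x : ℝ => Real.tanh x ^ K) 0 = K.factorial) :=
  iteratedDeriv_tanh_pow_at_zero_general k K
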